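/- Let q ∈ ℝ, let B : (0,∞) → ℝ be smooth, and define A(r) = (1−B(r))/r² + B''(r)/2. Then A'(r) + A(r)/r = −6q²/r⁵ for all r > 0 if and only if there exist constants b₋₁, b₁, b₂ ∈ ℝ such that B(r) = 1 + b₋₁/r + b₁r + b₂r² + q²/r² for all r > 0. -/

import Mathlib

open Set Filter

lemma hd_div1 (a : ℝ) {r : ℝ} (hr : r ≠ 0) :
    HasDerivAt (fun s : ℝ => a / s) (-a / r ^ 2) r := by
  have h : HasDerivAt (fun s : ℝ => a / s) ((0 * r - a * 1) / r ^ 2) r :=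
    (hasDerivAt_const r a).div (hasDerivAt_id r) hr
  convert h using 1
  field_simp
  ring

lemma hd_div2 (a : ℝ) {r : ℝ} (hr : r ≠ 0) :
    HasDerivAt (fun s : ℝ => a / s ^ 2) (-2 * a / r ^ 3) r := by
  have h : HasDerivAt (fun s : ℝ => a / s ^ 2) ((0 * r ^ 2 - a * ((2:ℕ) * r ^ (2 - 1))) / (r ^ 2) ^ 2) r :=
    (hasDerivAt_const r a).div (hasDerivAt_pow 2 r) (pow_ne_zero 2 hr)
  convert h using 1
  field_simp
  ring

lemma hd_div3 (a : ℝ) {r : ℝ} (hr : r ≠ 0) :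
    HasDerivAt (fun s : ℝ => a / s ^ 3) (-3 * a / r ^ 4) r := by
  have h : HasDerivAt (fun s : ℝ => a / s ^ 3) ((0 * r ^ 3 - a * ((3:ℕ) * r ^ (3 - 1))) / (r ^ 3) ^ 2) r :=
    (hasDerivAt_const r a).div (hasDerivAt_pow 3 r) (pow_ne_zero 3 hr)
  convert h using 1
  field_simp
  ring

lemma hd_div4 (a : ℝ) {r : ℝ} (hr : r ≠ 0) :
    HasDerivAt (fun s : ℝ => a / s ^ 4) (-4 * a / r ^ 5) r := by
  have h : HasDerivAt (fun s : ℝ => a / s ^ 4) ((0 * r ^ 4 - a * ((4:ℕ) * r ^ (4 - 1))) / (r ^ 4) ^ 2) r :=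
    (hasDerivAt_const r a).div (hasDerivAt_pow 4 r) (pow_ne_zero 4 hr)
  convert h using 1
  field_simp
  ring

lemma deriv_congr_Ioi {f g : ℝ → ℝ} (h : ∀ x ∈ Set.Ioi (0:ℝ), f x = g x) {r : ℝ}
    (hr : 0 < r) : deriv f r = deriv g r :=
  Filter.EventuallyEq.deriv_eq (Filter.eventually_of_mem (isOpen_Ioi.mem_nhds hr) h)

lemma const_of_hasDerivAt_zero {f : ℝ → ℝ}
    (h : ∀ x ∈ Set.Ioi (0:ℝ), HasDerivAt f 0 x) {x : ℝ} (hx : 0 < x) : f x = f 1 := by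
  refine (convex_Ioi (0:ℝ)).is_const_of_fderivWithin_eq_zero
    (f := f) (fun y hy => ((h y hy).differentiableAt).differentiableWithinAt)
    (fun y hy => ?_) hx (by norm_num)
  rw [fderivWithin_of_isOpen isOpen_Ioi hy, (h y hy).hasFDerivAt.fderiv]
  ext
  simp

/-- The Cotton-gravity field equation with linear electrodynamics
source, `A' + A/r = −6q²/r⁵` with `A = (1−B)/r² + B''/2`, holds on `(0,∞)` iff
`B(r) = 1 + b₋₁/r + b₁r + b₂r² + q²/r²`. -/
theorem cotton_gravity_charged_iff
    (q : ℝ) (B : ℝ → ℝ) (hB : ContDiffOn ℝ (⊤ : ℕ∞) B (Set.Ioi 0)) :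
    (∀ r : ℝ, 0 < r →
        deriv (fun s => (1 - B s) / s ^ 2 + deriv (deriv B) s / 2) r
          + ((1 - B r) / r ^ 2 + deriv (deriv B) r / 2) / r = -6 * q ^ 2 / r ^ 5) ↔
      (∃ bm1 b1 b2 : ℝ, ∀ r : ℝ, 0 < r →
        B r = 1 + bm1 / r + b1 * r + b2 * r ^ 2 + q ^ 2 / r ^ 2) := by
  constructor
  · -- Forward direction: solve the ODE.
    intro h
    set A : ℝ → ℝ := fun s => (1 - B s) / s ^ 2 + deriv (deriv B) s / 2 with hA
    have hBd : ∀ s : ℝ, 0 < s → DifferentiableAt ℝ B s := fun s hs =>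
      (hB.contDiffAt (isOpen_Ioi.mem_nhds hs)).differentiableAt (by simp)
    have hB1 : ContDiffOn ℝ (⊤ : ℕ∞) (deriv B) (Set.Ioi 0) := hB.deriv_of_isOpen isOpen_Ioi (by simp)
    have hB1d : ∀ s : ℝ, 0 < s → DifferentiableAt ℝ (deriv B) s := fun s hs =>
      (hB1.contDiffAt (isOpen_Ioi.mem_nhds hs)).differentiableAt (by simp)
    have hB2 : ContDiffOn ℝ (⊤ : ℕ∞) (deriv (deriv B)) (Set.Ioi 0) :=
      hB1.deriv_of_isOpen isOpen_Ioi (by simp)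
    have hB2d : ∀ s : ℝ, 0 < s → DifferentiableAt ℝ (deriv (deriv B)) s := fun s hs =>
      (hB2.contDiffAt (isOpen_Ioi.mem_nhds hs)).differentiableAt (by simp)
    have hAd : ∀ s : ℝ, 0 < s → HasDerivAt A (deriv A s) s := by
      intro s hs
      have : DifferentiableAt ℝ A s := by
        apply DifferentiableAt.add
        · exact ((differentiableAt_const 1).sub (hBd s hs)).div (differentiableAt_pow 2)
            (pow_ne_zero 2 hs.ne')
        · exact (hB2d s hs).div_const 2
      exact this.hasDerivAt
    -- Step 1: r * A r - 2q²/r³ is constant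
    have hF0 : ∀ s ∈ Set.Ioi (0:ℝ), HasDerivAt (fun x => x * A x - 2 * q ^ 2 / x ^ 3) 0 s := by
      intro s hs
      rw [Set.mem_Ioi] at hs
      have h1 := ((hasDerivAt_id s).mul (hAd s hs)).sub (hd_div3 (2 * q ^ 2) hs.ne')
      refine h1.congr_deriv (Eq.symm ?_)
      simp only [id_eq]
      have h2 : deriv A s + A s / s = -6 * q ^ 2 / s ^ 5 := h s hs
      have hds : deriv A s = -6 * q ^ 2 / s ^ 5 - A s / s := by linarith
      rw [hds]
      field_simp
      ring
    set c : ℝ := 1 * A 1 - 2 * q ^ 2 / 1 ^ 3 with hc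
    have hAval : ∀ s : ℝ, 0 < s → A s = c / s + 2 * q ^ 2 / s ^ 4 := by
      intro s hs
      have h1 := const_of_hasDerivAt_zero hF0 hs
      rw [← hc] at h1
      field_simp at h1 ⊢
      linear_combination h1
    -- Step 2: u := B - particular solution satisfies u'' = 2u/r²
    set u : ℝ → ℝ := fun s => B s - (1 + q ^ 2 / s ^ 2 - c * s) with hu
    have hudAt : ∀ s : ℝ, 0 < s → HasDerivAt u (deriv u s) s := by
      intro s hs
      have hd : DifferentiableAt ℝ u s := by
        apply (hBd s hs).sub
        apply DifferentiableAt.sub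
        · exact (differentiableAt_const 1).add
            ((differentiableAt_const (q ^ 2)).div (differentiableAt_pow 2)
              (pow_ne_zero 2 hs.ne'))
        · exact (differentiableAt_id).const_mul c
      exact hd.hasDerivAt
    have huval : ∀ s : ℝ, 0 < s → deriv u s = deriv B s + 2 * q ^ 2 / s ^ 3 + c := by
      intro s hs
      have hd : HasDerivAt u (deriv B s + 2 * q ^ 2 / s ^ 3 + c) s := by
        have h1 := ((hBd s hs).hasDerivAt).sub
          (((hasDerivAt_const s (1:ℝ)).add (hd_div2 (q ^ 2) hs.ne')).sub
            ((hasDerivAt_id s).const_mul c))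
        refine h1.congr_deriv (Eq.symm ?_)
        field_simp
        ring
      exact hd.deriv
    have huu : ∀ s : ℝ, 0 < s → HasDerivAt (deriv u) (2 * u s / s ^ 2) s := by
      intro s hs
      have hg1 : HasDerivAt (fun x => deriv B x + 2 * q ^ 2 / x ^ 3 + c)
          (deriv (deriv B) s + -6 * q ^ 2 / s ^ 4) s := by
        have h1 := (((hB1d s hs).hasDerivAt).add (hd_div3 (2 * q ^ 2) hs.ne')).add_const c
        refine h1.congr_deriv (Eq.symm ?_)
        ring
      have heq : deriv u =ᶠ[nhds s] fun x => deriv B x + 2 * q ^ 2 / x ^ 3 + c :=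
        Filter.eventually_of_mem (isOpen_Ioi.mem_nhds hs) fun x hx => huval x hx
      have h2 := hg1.congr_of_eventuallyEq heq
      refine h2.congr_deriv (Eq.symm ?_)
      have h3 : (1 - B s) / s ^ 2 + deriv (deriv B) s / 2 = c / s + 2 * q ^ 2 / s ^ 4 :=
        hAval s hs
      have hus : u s = B s - (1 + q ^ 2 / s ^ 2 - c * s) := rfl
      rw [hus]
      field_simp at h3 ⊢
      linear_combination (-1) * h3
    -- Step 3: two first integrals of the homogeneous equation
    have hC1 : ∀ s ∈ Set.Ioi (0:ℝ),
        HasDerivAt (fun x => deriv u x / x + u x / x ^ 2) 0 s := by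
      intro s hs
      rw [Set.mem_Ioi] at hs
      have h1 := (huu s hs).div (hasDerivAt_id s) hs.ne'
      have h2 := (hudAt s hs).div (hasDerivAt_pow 2 s) (pow_ne_zero 2 hs.ne')
      have h3 := h1.add h2
      refine h3.congr_deriv (Eq.symm ?_)
      simp only [id_eq]
      field_simp
      ring
    have hC2 : ∀ s ∈ Set.Ioi (0:ℝ),
        HasDerivAt (fun x => deriv u x * x ^ 2 - 2 * x * u x) 0 s := by
      intro s hs
      rw [Set.mem_Ioi] at hs
      have h1 := (huu s hs).mul (hasDerivAt_pow 2 s)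
      have h2 := ((hasDerivAt_id s).const_mul 2).mul (hudAt s hs)
      have h3 := h1.sub h2
      refine h3.congr_deriv (Eq.symm ?_)
      simp only [id_eq]
      field_simp
      ring
    set α : ℝ := deriv u 1 / 1 + u 1 / 1 ^ 2 with hα
    set β : ℝ := deriv u 1 * 1 ^ 2 - 2 * 1 * u 1 with hβ
    refine ⟨-β / 3, -c, α / 3, fun r hr => ?_⟩
    have e1 : deriv u r / r + u r / r ^ 2 = α := by
      have := const_of_hasDerivAt_zero hC1 hr; simpa [hα] using this
    have e2 : deriv u r * r ^ 2 - 2 * r * u r = β := by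
      have := const_of_hasDerivAt_zero hC2 hr; simpa [hβ] using this
    have e3 : 3 * (r * u r) = α * r ^ 3 - β := by
      field_simp at e1
      linear_combination r * e1 - e2
    have hur : u r = B r - (1 + q ^ 2 / r ^ 2 - c * r) := rfl
    rw [hur] at e3
    field_simp at e3 ⊢
    linear_combination e3
  · -- Reverse direction: verify the ODE.
    rintro ⟨bm1, b1, b2, hf⟩ r hr
    have hB1 : ∀ s : ℝ, 0 < s →
        deriv B s = -bm1 / s ^ 2 + b1 + 2 * b2 * s + -2 * q ^ 2 / s ^ 3 := by
      intro s hs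
      rw [deriv_congr_Ioi (fun x hx => hf x hx) hs]
      have hd : HasDerivAt (fun x : ℝ => 1 + bm1 / x + b1 * x + b2 * x ^ 2 + q ^ 2 / x ^ 2)
          (-bm1 / s ^ 2 + b1 + 2 * b2 * s + -2 * q ^ 2 / s ^ 3) s := by
        have h1 := (hasDerivAt_const s (1:ℝ)).add (hd_div1 bm1 hs.ne')
        have h2 := h1.add ((hasDerivAt_id s).const_mul b1)
        have h3 := h2.add ((hasDerivAt_pow 2 s).const_mul b2)
        have h4 := h3.add (hd_div2 (q ^ 2) hs.ne')
        exact h4.congr_deriv (by ring)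
      exact hd.deriv
    have hB2 : ∀ s : ℝ, 0 < s →
        deriv (deriv B) s = 2 * bm1 / s ^ 3 + 2 * b2 + 6 * q ^ 2 / s ^ 4 := by
      intro s hs
      rw [deriv_congr_Ioi (fun x hx => hB1 x hx) hs]
      have hd : HasDerivAt (fun x : ℝ => -bm1 / x ^ 2 + b1 + 2 * b2 * x + -2 * q ^ 2 / x ^ 3)
          (2 * bm1 / s ^ 3 + 2 * b2 + 6 * q ^ 2 / s ^ 4) s := by
        have h1 := (hd_div2 (-bm1) hs.ne').add_const b1
        have h2 := h1.add ((hasDerivAt_id s).const_mul (2 * b2))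
        have h3 := h2.add (hd_div3 (-2 * q ^ 2) hs.ne')
        exact h3.congr_deriv (by field_simp; ring)
      exact hd.deriv
    have hAeq : ∀ s : ℝ, 0 < s →
        (1 - B s) / s ^ 2 + deriv (deriv B) s / 2 = -b1 / s + 2 * q ^ 2 / s ^ 4 := by
      intro s hs
      rw [hf s hs, hB2 s hs]
      field_simp
      ring
    have hderivA : deriv (fun s => (1 - B s) / s ^ 2 + deriv (deriv B) s / 2) r
        = b1 / r ^ 2 + -8 * q ^ 2 / r ^ 5 := by
      rw [deriv_congr_Ioi (fun x hx => hAeq x hx) hr]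
      have hd : HasDerivAt (fun x : ℝ => -b1 / x + 2 * q ^ 2 / x ^ 4)
          (b1 / r ^ 2 + -8 * q ^ 2 / r ^ 5) r := by
        have h1 := (hd_div1 (-b1) hr.ne').add (hd_div4 (2 * q ^ 2) hr.ne')
        exact h1.congr_deriv (by ring)
      exact hd.deriv
    rw [hderivA, hAeq r hr]
    field_simp
    ring
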